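/- arXiv:2306.03283 — 2 statements merged into one kernel-verified Lean document; each statement's English description precedes it below -/
import Mathlib

section
/- Let I be a finite group, P a normal subgroup, and M a ℤ[I]-module such that multiplication by |P| is an automorphism of M. Then the norm map M^P → M_P from P-invariants to P-coinvariants, induced by m ↦ Σ_{x∈P} x·m, is an isomorphism, and the canonical map Z¹(I/P, M^P) → Z¹(I, M) of groups of crossed homomorphisms admits a linear section. -/
/-- The subgroup of coinvariance relations: generated by `p • m - m` for `p ∈ P`. -/
def coinvRel {I : Type*} [Group I] (P : Subgroup I) (M : Type*) [AddCommGroup M]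
    [DistribMulAction I M] : AddSubgroup M :=
  AddSubgroup.closure {x | ∃ p ∈ P, ∃ m : M, x = p • m - m}

/-- A crossed homomorphism `u : I → M`, i.e. `u(gh) = u(g) + g•u(h)`. -/
def IsCrossedHom {I M : Type*} [Group I] [AddCommGroup M] [DistribMulAction I M]
    (u : I → M) : Prop :=
  ∀ g h : I, u (g * h) = u g + g • u h

section Helpers

variable {I : Type*} [Group I] (P : Subgroup I) [Fintype ↥P] {M : Type*}
  [AddCommGroup M] [DistribMulAction I M]

/-- The norm map `m ↦ ∑_{p ∈ P} p • m`. -/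
def nmap (m : M) : M := ∑ p : ↥P, (p : I) • m

lemma nmap_apply (m : M) : nmap P m = ∑ p : ↥P, (p : I) • m := rfl

lemma nmap_add (a b : M) : nmap P (a + b) = nmap P a + nmap P b := by
  simp only [nmap, smul_add]
  exact Finset.sum_add_distrib

lemma nmap_zero : nmap P (0 : M) = 0 := by simp [nmap]

lemma nmap_neg (a : M) : nmap P (-a) = -nmap P a := by
  simp [nmap, Finset.sum_neg_distrib]

lemma nmap_sub (a b : M) : nmap P (a - b) = nmap P a - nmap P b := by
  rw [sub_eq_add_neg, nmap_add, nmap_neg, sub_eq_add_neg]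

lemma nmap_nsmul (k : ℕ) (m : M) : nmap P (k • m) = k • nmap P m := by
  have h : ∀ p : ↥P, (p : I) • (k • m) = k • ((p : I) • m) := fun p => smul_comm _ _ _
  rw [nmap_apply, Finset.sum_congr rfl (fun p _ => h p), ← Finset.smul_sum, nmap_apply]

lemma nmap_smul_left {p : I} (hp : p ∈ P) (m : M) : p • nmap P m = nmap P m := by
  rw [nmap_apply, Finset.smul_sum]
  exact Fintype.sum_bijective (fun r : ↥P => (⟨p, hp⟩ : ↥P) * r)
    (Group.mulLeft_bijective _) _ _ (fun r => by rw [← mul_smul]; rfl)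

lemma nmap_smul_right {p : I} (hp : p ∈ P) (m : M) : nmap P (p • m) = nmap P m := by
  rw [nmap_apply]
  exact Fintype.sum_bijective (fun r : ↥P => r * (⟨p, hp⟩ : ↥P))
    (Group.mulRight_bijective _) _ _ (fun r => by rw [← mul_smul]; rfl)

lemma nmap_invariant {m : M} (h : ∀ p ∈ P, p • m = m) :
    nmap P m = Fintype.card ↥P • m := by
  have h' : ∀ p : ↥P, (p : I) • m = m := fun p => h (p : I) p.2
  rw [nmap_apply, Finset.sum_congr rfl (fun p _ => h' p), Finset.sum_const, Finset.card_univ]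

lemma nmap_sub_mem (m : M) : nmap P m - Fintype.card ↥P • m ∈ coinvRel P M := by
  have h : nmap P m - Fintype.card ↥P • m = ∑ p : ↥P, ((p : I) • m - m) := by
    rw [Finset.sum_sub_distrib, Finset.sum_const, Finset.card_univ, nmap_apply]
  rw [h]
  exact AddSubgroup.sum_mem _ fun p _ =>
    AddSubgroup.subset_closure ⟨(p : I), p.2, m, rfl⟩

lemma nmap_coinv_zero {x : M} (hx : x ∈ coinvRel P M) : nmap P x = 0 := by
  refine AddSubgroup.closure_induction ?_ ?_ ?_ ?_ hx
  · rintro y ⟨p, hp, m, rfl⟩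
    rw [nmap_sub, nmap_smul_right P hp, sub_self]
  · exact nmap_zero P
  · intro a b _ _ ha hb
    rw [nmap_add, ha, hb, add_zero]
  · intro a _ ha
    rw [nmap_neg, ha, neg_zero]

end Helpers

/-- If multiplication by `|P|` is an automorphism of `M`, the norm map
`M^P → M_P`, `m ↦ Σ_{x∈P} x•m`, is an isomorphism, and the inflation map
`Z¹(I/P, M^P) → Z¹(I, M)` of crossed homomorphisms admits a linear section. -/
theorem stmt5 {I M : Type*} [Group I] [Fintype I] (P : Subgroup I) [P.Normal] [Fintype ↥P]
    [AddCommGroup M] [DistribMulAction I M]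
    (hP : Function.Bijective fun m : M => Fintype.card ↥P • m) :
    Function.Bijective
      (fun m : {m : M // ∀ p ∈ P, p • m = m} =>
        (QuotientAddGroup.mk (∑ p : ↥P, (p : I) • (m : M)) : M ⧸ coinvRel P M)) ∧
    ∃ r : (I → M) → ((I ⧸ P) → M),
      (∀ u v : I → M, IsCrossedHom u → IsCrossedHom v → r (u + v) = r u + r v) ∧
      (∀ u : I → M, IsCrossedHom u →
        (∀ x : I ⧸ P, ∀ p ∈ P, p • r u x = r u x) ∧
        (∀ g h : I, r u (QuotientGroup.mk (g * h)) =
          r u (QuotientGroup.mk g) + g • r u (QuotientGroup.mk h))) ∧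
      (∀ w : (I ⧸ P) → M,
        (∀ g h : I, w (QuotientGroup.mk (g * h)) =
          w (QuotientGroup.mk g) + g • w (QuotientGroup.mk h)) →
        (∀ x : I ⧸ P, ∀ p ∈ P, p • w x = w x) →
        r (fun g => w (QuotientGroup.mk g)) = w) := by
  set n := Fintype.card ↥P with hn
  -- the inverse of multiplication by `n`
  set σ : M → M := Function.invFun (fun m : M => n • m) with hσdef
  have hσ1 : ∀ m : M, n • σ m = m := fun m => Function.rightInverse_invFun hP.surjective m
  have hinj : ∀ a b : M, n • a = n • b → a = b := fun a b h => hP.injective h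
  have hσadd : ∀ a b : M, σ (a + b) = σ a + σ b := fun a b =>
    hinj _ _ (by rw [hσ1, smul_add, hσ1, hσ1])
  have hσsmul : ∀ (g : I) (m : M), σ (g • m) = g • σ m := fun g m =>
    hinj _ _ (by rw [hσ1, smul_comm n g (σ m), hσ1])
  have hσ0 : σ (0 : M) = 0 := hinj _ _ (by rw [hσ1, smul_zero])
  constructor
  · -- Part 1 : the norm map is bijective
    constructor
    · rintro ⟨m₁, h₁⟩ ⟨m₂, h₂⟩ h
      simp only [Subtype.mk.injEq]
      simp only [← nmap_apply] at h
      rw [QuotientAddGroup.eq] at h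
      have hmem : nmap P (m₂ - m₁) ∈ coinvRel P M := by
        rw [nmap_sub]
        have he : -nmap P m₁ + nmap P m₂ = nmap P m₂ - nmap P m₁ := by abel
        rwa [he] at h
      have hdinv : ∀ p ∈ P, p • (m₂ - m₁) = m₂ - m₁ := fun p hp => by
        rw [smul_sub, h₁ p hp, h₂ p hp]
      rw [nmap_invariant P hdinv] at hmem
      have hz : nmap P (n • (m₂ - m₁)) = 0 := nmap_coinv_zero P hmem
      rw [nmap_nsmul, nmap_invariant P hdinv] at hz
      have hd0 : m₂ - m₁ = 0 := by
        have h1 : n • (m₂ - m₁) = 0 := hinj _ _ (by rw [smul_zero]; exact hz)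
        exact hinj _ _ (by rw [h1, smul_zero])
      exact (sub_eq_zero.mp hd0).symm
    · intro q
      obtain ⟨m, rfl⟩ := QuotientAddGroup.mk_surjective q
      refine ⟨⟨σ (nmap P (σ m)), fun p hp => ?_⟩, ?_⟩
      · rw [← hσsmul, nmap_smul_left P hp]
      · simp only [← nmap_apply]
        have hNinv : ∀ p ∈ P, p • nmap P (σ m) = nmap P (σ m) := fun p hp =>
          nmap_smul_left P hp _
        have heq : nmap P (σ (nmap P (σ m))) = nmap P (σ m) := by
          refine hinj _ _ ?_
          rw [← nmap_nsmul, hσ1, nmap_invariant P hNinv]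
        rw [heq, QuotientAddGroup.eq]
        have hmem := nmap_sub_mem P (σ m)
        rw [hσ1] at hmem
        have he : -nmap P (σ m) + m = -(nmap P (σ m) - m) := by abel
        rw [he]
        exact neg_mem hmem
  · -- Part 2 : the linear section of inflation
    -- `Su u` is the sum of `u` over `P`; `u' u` is `u` modified by the coboundary of `σ (Su u)`
    set Su : (I → M) → M := fun u => ∑ p : ↥P, u (p : I) with hSu
    set u' : (I → M) → I → M := fun u g => u g + g • σ (Su u) - σ (Su u) with hu'
    -- the key vanishing of `u'` on `P`
    have hkey : ∀ u : I → M, IsCrossedHom u → ∀ q : I, q ∈ P → u' u q = 0 := by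
      intro u hu q hq
      have hsum : ∑ p : ↥P, u (q * (p : I)) = Su u :=
        Fintype.sum_bijective (fun r : ↥P => (⟨q, hq⟩ : ↥P) * r)
          (Group.mulLeft_bijective _) _ _ (fun r => rfl)
      have hsum2 : ∑ p : ↥P, u (q * (p : I)) = n • u q + q • Su u := by
        have hc : ∀ p : ↥P, u (q * (p : I)) = u q + q • u (p : I) := fun p => hu q (p : I)
        rw [Finset.sum_congr rfl (fun p _ => hc p), Finset.sum_add_distrib,
          Finset.sum_const, Finset.card_univ, ← Finset.smul_sum]
      have h3 : n • u q = Su u - q • Su u := by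
        rw [hsum2] at hsum
        rw [eq_sub_iff_add_eq]
        exact hsum
      have h4 : u q = σ (Su u) - q • σ (Su u) := by
        refine hinj _ _ ?_
        rw [h3, smul_sub, hσ1, smul_comm n q (σ (Su u)), hσ1]
      simp only [hu']
      rw [h4]
      abel
    -- `u'` is a crossed homomorphism
    have hcross : ∀ u : I → M, IsCrossedHom u → ∀ g h : I,
        u' u (g * h) = u' u g + g • u' u h := by
      intro u hu g h
      simp only [hu']
      rw [hu g h, mul_smul, smul_sub, smul_add]
      abel
    -- `u'` is constant on cosets
    have hconst : ∀ u : I → M, IsCrossedHom u → ∀ g₁ g₂ : I,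
        (QuotientGroup.mk g₁ : I ⧸ P) = QuotientGroup.mk g₂ → u' u g₁ = u' u g₂ := by
      intro u hu g₁ g₂ h
      have hp : g₁⁻¹ * g₂ ∈ P := QuotientGroup.eq.mp h
      have hg : g₂ = g₁ * (g₁⁻¹ * g₂) := by group
      rw [hg, hcross u hu, hkey u hu _ hp, smul_zero, add_zero]
    -- values of `u'` are `P`-invariant
    have hinv : ∀ u : I → M, IsCrossedHom u → ∀ g : I, ∀ p ∈ P, p • u' u g = u' u g := by
      intro u hu g p hp
      have h1 : u' u (p * g) = p • u' u g := by
        rw [hcross u hu, hkey u hu p hp, zero_add]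
      have h2 : (QuotientGroup.mk (p * g) : I ⧸ P) = QuotientGroup.mk g := by
        rw [QuotientGroup.eq]
        have he : (p * g)⁻¹ * g = g⁻¹ * p⁻¹ * (g⁻¹)⁻¹ := by group
        rw [he]
        exact (inferInstance : P.Normal).conj_mem _ (inv_mem hp) _
      rw [← h1, hconst u hu _ _ h2]
    refine ⟨fun u x => u' u x.out, ?_, ?_, ?_⟩
    · -- linearity
      intro u v hu hv
      funext x
      simp only [Pi.add_apply, hu']
      have hS : Su (u + v) = Su u + Su v := by
        simp only [hSu, Pi.add_apply]
        exact Finset.sum_add_distrib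
      simp only [hS, hσadd, smul_add, Pi.add_apply]
      abel
    · -- invariance and crossed-hom property
      intro u hu
      refine ⟨fun x p hp => hinv u hu _ p hp, fun g h => ?_⟩
      have e1 : u' u (QuotientGroup.mk (g * h) : I ⧸ P).out = u' u (g * h) :=
        hconst u hu _ _ (by rw [QuotientGroup.out_eq'])
      have e2 : u' u (QuotientGroup.mk g : I ⧸ P).out = u' u g :=
        hconst u hu _ _ (by rw [QuotientGroup.out_eq'])
      have e3 : u' u (QuotientGroup.mk h : I ⧸ P).out = u' u h :=
        hconst u hu _ _ (by rw [QuotientGroup.out_eq'])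
      simp only [e1, e2, e3]
      exact hcross u hu g h
    · -- section property
      intro w hw _
      funext x
      have hw1 : w (QuotientGroup.mk 1) = 0 := by
        have h11 := hw 1 1
        rw [mul_one, one_smul] at h11
        exact (left_eq_add.mp h11)
      have hS : Su (fun g => w (QuotientGroup.mk g)) = 0 := by
        have hz : ∀ p : ↥P, w (QuotientGroup.mk ((p : I))) = 0 := fun p => by
          have h1 : (QuotientGroup.mk (p : I) : I ⧸ P) = QuotientGroup.mk 1 := by
            rw [QuotientGroup.eq]
            simp only [mul_one, inv_mem_iff]
            exact p.2
          rw [h1, hw1]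
        simp only [hSu]
        rw [Finset.sum_congr rfl (fun p _ => hz p), Finset.sum_const, smul_zero]
      simp only [hu', hS, hσ0, smul_zero, add_zero, sub_zero]
      rw [QuotientGroup.out_eq' x]
end

section
/- Let G be the group of order 16 given by generators σ₂, σ₃, γ with relations σ₂² = σ₃² = 1, σ₂σ₃ = σ₃σ₂, γσ₂γ⁻¹ = σ₃, γσ₃γ⁻¹ = σ₂, γ⁴ = 1, γ² central (i.e., G ≅ (ℤ/2ℤ × ℤ/2ℤ) ⋊ ℤ/4ℤ with γ swapping the factors). Let M = (ℤ/2ℤ)² with G acting through γ by swapping coordinates and σ₂, σ₃ acting trivially. Then H¹(G, M) ≅ (ℤ/2ℤ)³. -/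
/-- The swap automorphism of `Multiplicative ((ℤ/2ℤ)²)`. -/
def swapMulAut : MulAut (Multiplicative (ZMod 2 × ZMod 2)) :=
  AddEquiv.toMultiplicative
    (AddEquiv.prodComm : (ZMod 2 × ZMod 2) ≃+ (ZMod 2 × ZMod 2))

lemma swapMulAut_sq : swapMulAut ^ 2 = 1 := by
  rw [sq]
  ext m <;> rfl

/-- The homomorphism `ℤ/4ℤ → Aut((ℤ/2ℤ)²)` sending the generator to the swap. -/
def phi19 : Multiplicative (ZMod 4) →* MulAut (Multiplicative (ZMod 2 × ZMod 2)) where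
  toFun x := swapMulAut ^ (Multiplicative.toAdd x).val
  map_one' := by simp
  map_mul' x y := by
    have h : ∀ m : ℕ, swapMulAut ^ m = swapMulAut ^ (m % 2) :=
      fun m => pow_eq_pow_mod m swapMulAut_sq
    show swapMulAut ^ (Multiplicative.toAdd (x * y)).val =
      swapMulAut ^ (Multiplicative.toAdd x).val * swapMulAut ^ (Multiplicative.toAdd y).val
    rw [← pow_add, h, h ((Multiplicative.toAdd x).val + (Multiplicative.toAdd y).val)]
    congr 1
    simp only [toAdd_mul, ZMod.val_add]
    exact Nat.mod_mod_of_dvd _ (by norm_num)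

/-- `G`, the group of order 16: `(ℤ/2ℤ × ℤ/2ℤ) ⋊ ℤ/4ℤ` with the generator `γ` of `ℤ/4ℤ`
acting by swapping the two factors (so `γ²` is central and acts trivially on the normal
subgroup). -/
abbrev G19 : Type :=
  SemidirectProduct (Multiplicative (ZMod 2 × ZMod 2)) (Multiplicative (ZMod 4)) phi19

/-- The swap automorphism of the additive group `M = (ℤ/2ℤ)²`. -/
def swapAddAut : Multiplicative (AddAut (ZMod 2 × ZMod 2)) :=
  Multiplicative.ofAdd (AddEquiv.prodComm : (ZMod 2 × ZMod 2) ≃+ (ZMod 2 × ZMod 2))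

lemma swapAddAut_sq : swapAddAut ^ 2 = 1 := by
  rw [sq]
  ext m <;> rfl

/-- The action of `ℤ/4ℤ` on `M = (ℤ/2ℤ)²` through the swap. -/
def phiAdd19 : Multiplicative (ZMod 4) →* Multiplicative (AddAut (ZMod 2 × ZMod 2)) where
  toFun x := swapAddAut ^ (Multiplicative.toAdd x).val
  map_one' := by simp
  map_mul' x y := by
    have h : ∀ m : ℕ, swapAddAut ^ m = swapAddAut ^ (m % 2) :=
      fun m => pow_eq_pow_mod m swapAddAut_sq
    show swapAddAut ^ (Multiplicative.toAdd (x * y)).val =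
      swapAddAut ^ (Multiplicative.toAdd x).val * swapAddAut ^ (Multiplicative.toAdd y).val
    rw [← pow_add, h, h ((Multiplicative.toAdd x).val + (Multiplicative.toAdd y).val)]
    congr 1
    simp only [toAdd_mul, ZMod.val_add]
    exact Nat.mod_mod_of_dvd _ (by norm_num)

/-- The action of `G` on `M = (ℤ/2ℤ)²`: `γ` swaps the coordinates, while `σ₂, σ₃`
(the elements of the normal subgroup `(ℤ/2ℤ)²`) act trivially. -/
noncomputable instance : DistribMulAction G19 (ZMod 2 × ZMod 2) :=
  DistribMulAction.compHom _
    (({ toFun := fun e => (Multiplicative.toAdd e).toAddMonoidHom, map_one' := rfl,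
        map_mul' := fun _ _ => rfl } :
        Multiplicative (AddAut (ZMod 2 × ZMod 2)) →* AddMonoid.End (ZMod 2 × ZMod 2)).comp
      (phiAdd19.comp SemidirectProduct.rightHom))

/-- The group of crossed homomorphisms `G → M`. -/
def Z19 : AddSubgroup (G19 → ZMod 2 × ZMod 2) where
  carrier := {u | ∀ g h : G19, u (g * h) = u g + g • u h}
  zero_mem' := by intro g h; simp
  add_mem' := by
    intro u v hu hv g h
    simp only [Pi.add_apply, hu g h, hv g h, smul_add]
    abel
  neg_mem' := by
    intro u hu g h
    simp only [Pi.neg_apply, hu g h, smul_neg]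
    abel

/-- The subgroup of principal crossed homomorphisms `g ↦ g•m − m`. -/
noncomputable def B19 : AddSubgroup (G19 → ZMod 2 × ZMod 2) :=
  (AddMonoidHom.mk' (fun m : ZMod 2 × ZMod 2 => fun g : G19 => g • m - m)
    (by
      intro a b
      funext g
      simp only [Pi.add_apply, smul_add]
      abel)).range

/-! A 1-cocycle is determined by its values on the generators `σ₂` and `γ`. A coboundary
`g ↦ g • m - m` vanishes at `σ₂`, which acts trivially, and takes a diagonal value `(a, a)` at `γ`;
conversely a cocycle `u` with `u σ₂ = 0` and `u γ = (a, a)` agrees with the coboundary of `(a, 0)`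
on the generators, hence everywhere. So `u ↦ ((u γ).1 + (u γ).2, u σ₂)` has kernel exactly the
coboundaries. It is onto: the projection `g ↦ g.left` to the normal subgroup, its composite with the
swap, and a cocycle inflated from `ℤ/4ℤ` map to a basis of `(ℤ/2ℤ)³`. -/

open groupCohomology

section Cocycles

variable {G A : Type*} [Group G] [AddCommGroup A]

theorem isCocycle₁_smul_sub [DistribMulAction G A] (x : A) :
    IsCocycle₁ fun g : G => g • x - x := by
  intro g h
  simp only [mul_smul, smul_sub]
  abel

theorem IsCocycle₁.eq_of_eqOn_dense [MulAction G A] {f f' : G → A}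
    (hf : IsCocycle₁ f) (hf' : IsCocycle₁ f') {S : Set G} (hS : Subgroup.closure S = ⊤)
    (h : S.EqOn f f') : f = f' := by
  funext g
  have hg : g ∈ Subgroup.closure S := hS ▸ Subgroup.mem_top g
  induction hg using Subgroup.closure_induction with
  | mem x hx => exact h hx
  | one => rw [map_one_of_isCocycle₁ hf, map_one_of_isCocycle₁ hf']
  | mul x y _ _ hx hy => rw [hf, hf', hx, hy]
  | inv x _ hx =>
    apply MulAction.injective x
    simp only [map_inv_of_isCocycle₁ hf, map_inv_of_isCocycle₁ hf', hx]

end Cocycles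

theorem mem_Z19_iff {u : G19 → ZMod 2 × ZMod 2} : u ∈ Z19 ↔ IsCocycle₁ u :=
  forall₂_congr fun g h => by rw [add_comm (u g)]

instance : Fintype G19 := Fintype.ofEquiv _ SemidirectProduct.equivProd.symm

def σ₂ : G19 := ⟨Multiplicative.ofAdd (1, 0), 1⟩

def γ : G19 := ⟨1, Multiplicative.ofAdd 1⟩

theorem σ₂_smul (m : ZMod 2 × ZMod 2) : σ₂ • m = m := rfl

theorem γ_smul (m : ZMod 2 × ZMod 2) : γ • m = m.swap := rfl

theorem closure_σ₂_γ : Subgroup.closure {σ₂, γ} = ⊤ := by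
  have hσ₂ : σ₂ ∈ Subgroup.closure {σ₂, γ} := Subgroup.subset_closure (by simp)
  have hγ : γ ∈ Subgroup.closure {σ₂, γ} := Subgroup.subset_closure (by simp)
  have normal_form : ∀ g : G19, ∃ a b : Fin 2, ∃ k : Fin 4,
      g = σ₂ ^ (a : ℕ) * (γ * σ₂ * γ⁻¹) ^ (b : ℕ) * γ ^ (k : ℕ) := by
    decide
  refine eq_top_iff.mpr fun g _ => ?_
  obtain ⟨a, b, k, rfl⟩ := normal_form g
  exact mul_mem (mul_mem (pow_mem hσ₂ _) (pow_mem (mul_mem (mul_mem hγ hσ₂) (inv_mem hγ)) _))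
    (pow_mem hγ _)

def cocycleInvariants : Z19 →+ ZMod 2 × ZMod 2 × ZMod 2 where
  toFun u := ((u.1 γ).1 + (u.1 γ).2, u.1 σ₂)
  map_zero' := rfl
  map_add' u v := by
    simp only [AddSubgroup.coe_add, Pi.add_apply, Prod.fst_add, Prod.snd_add, Prod.mk_add_mk]
    congr 1
    abel

theorem ker_cocycleInvariants : cocycleInvariants.ker = B19.addSubgroupOf Z19 := by
  ext ⟨u, hu⟩
  rw [AddMonoidHom.mem_ker, AddSubgroup.mem_addSubgroupOf]
  constructor
  · intro h
    obtain ⟨hγ, hσ₂⟩ : (u γ).1 + (u γ).2 = 0 ∧ u σ₂ = 0 := Prod.ext_iff.mp h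
    refine ⟨((u γ).1, 0), IsCocycle₁.eq_of_eqOn_dense (isCocycle₁_smul_sub _)
      (mem_Z19_iff.mp hu) closure_σ₂_γ ?_⟩
    rintro _ (rfl | rfl)
    · show σ₂ • _ - _ = u σ₂
      rw [σ₂_smul, sub_self, hσ₂]
    · show γ • _ - _ = u γ
      rw [γ_smul]
      revert hγ
      generalize u γ = p
      revert p
      decide
  · rintro ⟨m, rfl⟩
    show ((γ • m - m).1 + (γ • m - m).2, σ₂ • m - m) = 0
    simp only [γ_smul, σ₂_smul, Prod.fst_sub, Prod.snd_sub, Prod.fst_swap, Prod.snd_swap,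
      sub_add_sub_cancel, sub_self, Prod.mk_zero_zero]

def leftCocycle : G19 → ZMod 2 × ZMod 2 := fun g => Multiplicative.toAdd g.left

def swapLeftCocycle : G19 → ZMod 2 × ZMod 2 := fun g => (Multiplicative.toAdd g.left).swap

-- The inflation of the cocycle of `ℤ/4ℤ` with `γ ↦ (1, 0)`: its value at `γ ^ k` is
-- `(1, 0) + γ • (1, 0) + ⋯ + γ ^ (k - 1) • (1, 0)`.
def gammaCocycle : G19 → ZMod 2 × ZMod 2 := fun g =>
  ![(0, 0), (1, 0), (1, 1), (0, 1)] (Multiplicative.toAdd g.right : Fin 4)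

theorem leftCocycle_mem_Z19 : leftCocycle ∈ Z19 := by
  show ∀ g h : G19, _
  decide

theorem swapLeftCocycle_mem_Z19 : swapLeftCocycle ∈ Z19 := by
  show ∀ g h : G19, _
  decide

theorem gammaCocycle_mem_Z19 : gammaCocycle ∈ Z19 := by
  show ∀ g h : G19, _
  decide

theorem cocycleInvariants_surjective : Function.Surjective cocycleInvariants := by
  have h₁ : cocycleInvariants ⟨leftCocycle, leftCocycle_mem_Z19⟩ = (0, 1, 0) := rfl
  have h₂ : cocycleInvariants ⟨swapLeftCocycle, swapLeftCocycle_mem_Z19⟩ = (0, 0, 1) := rfl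
  have h₃ : cocycleInvariants ⟨gammaCocycle, gammaCocycle_mem_Z19⟩ = (1, 0, 0) := rfl
  rintro ⟨c, a, b⟩
  refine ⟨a.val • ⟨leftCocycle, leftCocycle_mem_Z19⟩ +
    b.val • ⟨swapLeftCocycle, swapLeftCocycle_mem_Z19⟩ +
    c.val • ⟨gammaCocycle, gammaCocycle_mem_Z19⟩, ?_⟩
  rw [map_add, map_add, map_nsmul, map_nsmul, map_nsmul, h₁, h₂, h₃]
  revert a b c
  decide

/-- `H¹(G, M) ≅ (ℤ/2ℤ)³` for the order-16 group `G = (ℤ/2ℤ)² ⋊ ℤ/4ℤ` acting on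
`M = (ℤ/2ℤ)²` through the coordinate swap; `H¹` is the group of crossed homomorphisms
modulo principal ones. -/
theorem stmt19 :
    Nonempty ((↥Z19 ⧸ B19.addSubgroupOf Z19) ≃+ (ZMod 2 × ZMod 2 × ZMod 2)) :=
  ⟨(QuotientAddGroup.quotientAddEquivOfEq ker_cocycleInvariants.symm).trans
    (QuotientAddGroup.quotientKerEquivOfSurjective _ cocycleInvariants_surjective)⟩
end
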